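/- Let γ > 0, β > 0, and m > 1. Suppose y : (0, ∞) → [0, ∞) is differentiable and satisfies y'(t) + γ·y(t)^m ≤ β for all t > 0 (with possibly y(t) → ∞ as t → 0⁺). Then for all t > 0, y(t) ≤ (β/γ)^(1/m) + (γ·(m−1)·t)^(−1/(m−1)). -/

import Mathlib

/-!
Put `c = (β/γ)^(1/m)`, so that `γ c^m = β`, and let `g_a(t) = (γ (m-1) (t-a))^(-1/(m-1))`,
the solution of `g' = -γ g^m` that blows up at `t = a`. Since `x ↦ x^m` is strictly superadditive,
`z_a = c + g_a` is a strict supersolution: `z_a' + γ z_a^m > β` on `(a, ∞)`.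
For `0 < a`, `y` is bounded near `a` while `z_a → ∞`, so `y ≤ z_a` at some point close to `a`,
and the comparison principle propagates this to all later times. Letting `a → 0⁺` gives the bound.
-/

open Real Set Filter Topology

theorem le_of_deriv_le_of_lt_deriv {F z' y z : ℝ → ℝ} {s t : ℝ} (hst : s ≤ t)
    (hy : ∀ x ∈ Icc s t, DifferentiableAt ℝ y x) (hz : ∀ x ∈ Icc s t, HasDerivAt z (z' x) x)
    (hy' : ∀ x ∈ Ico s t, deriv y x ≤ F (y x)) (hz' : ∀ x ∈ Ico s t, F (z x) < z' x)
    (hs : y s ≤ z s) : y t ≤ z t :=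
  image_le_of_deriv_right_lt_deriv_boundary'
    (fun x hx => (hy x hx).continuousAt.continuousWithinAt)
    (fun x hx => (hy x (Ico_subset_Icc_self hx)).hasDerivAt.hasDerivWithinAt) hs
    (fun x hx => (hz x hx).continuousAt.continuousWithinAt)
    (fun x hx => (hz x (Ico_subset_Icc_self hx)).hasDerivWithinAt)
    (fun x hx hxz => (hy' x hx).trans_lt (by rw [hxz]; exact hz' x hx)) ⟨hst, le_rfl⟩

theorem rpow_add_rpow_lt_add_rpow {a b p : ℝ} (ha : 0 < a) (hb : 0 < b) (hp : 1 < p) :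
    a ^ p + b ^ p < (a + b) ^ p := by
  have hsplit : ∀ x : ℝ, 0 < x → x ^ p = x * x ^ (p - 1) := fun x hx => by
    rw [← rpow_one_add' hx.le (by linarith), add_sub_cancel]
  have hab : 0 < a + b := by linarith
  rw [hsplit a ha, hsplit b hb, hsplit _ hab, add_mul]
  gcongr <;> linarith

noncomputable def blowUpProfile (γ m a t : ℝ) : ℝ :=
  (γ * (m - 1) * (t - a)) ^ (-(1 / (m - 1)))

theorem hasDerivAt_blowUpProfile {γ m a t : ℝ} (hu : 0 < γ * (m - 1) * (t - a)) :
    HasDerivAt (blowUpProfile γ m a) (-γ * blowUpProfile γ m a t ^ m) t := by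
  have hm : m - 1 ≠ 0 := by rintro h; simp [h] at hu
  have hlin : HasDerivAt (fun s => γ * (m - 1) * (s - a)) (γ * (m - 1)) t := by
    simpa using ((hasDerivAt_id t).sub_const a).const_mul (γ * (m - 1))
  refine ((hasDerivAt_rpow_const (Or.inl hu.ne')).comp t hlin).congr_deriv ?_
  rw [blowUpProfile, ← rpow_mul hu.le,
    show -(1 / (m - 1)) * m = -(1 / (m - 1)) - 1 by field_simp; ring]
  field_simp

theorem tendsto_blowUpProfile_nhdsGT {γ m : ℝ} (hγ : 0 < γ) (hm : 1 < m) (a : ℝ) :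
    Tendsto (blowUpProfile γ m a) (𝓝[>] a) atTop := by
  have hc : 0 < γ * (m - 1) := mul_pos hγ (by linarith)
  have hlin : Tendsto (fun s => γ * (m - 1) * (s - a)) (𝓝[>] a) (𝓝[>] 0) := by
    refine tendsto_nhdsWithin_iff.2 ⟨?_, eventually_nhdsWithin_of_forall fun s hs => ?_⟩
    · refine tendsto_nhdsWithin_of_tendsto_nhds ?_
      simpa using ((continuous_sub_right a).const_mul (γ * (m - 1))).tendsto a
    · exact mul_pos hc (sub_pos.2 hs)
  exact (tendsto_rpow_neg_nhdsGT_zero (neg_neg_of_pos (one_div_pos.2 (by linarith)))).comp hlin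

theorem le_add_blowUpProfile {γ β m : ℝ} {y : ℝ → ℝ} (hγ : 0 < γ) (hβ : 0 < β) (hm : 1 < m)
    (hy_diff : ∀ t : ℝ, 0 < t → DifferentiableAt ℝ y t)
    (hineq : ∀ t : ℝ, 0 < t → deriv y t + γ * y t ^ m ≤ β) {a t : ℝ} (ha : 0 < a) (hat : a < t) :
    y t ≤ (β / γ) ^ (1 / m) + blowUpProfile γ m a t := by
  set c := (β / γ) ^ (1 / m)
  have hc : 0 < c := rpow_pos_of_pos (div_pos hβ hγ) _
  have hcm : γ * c ^ m = β := by
    rw [← rpow_mul (div_pos hβ hγ).le, one_div_mul_cancel (by linarith), rpow_one,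
      mul_div_cancel₀ β hγ.ne']
  have hu : ∀ x, a < x → 0 < γ * (m - 1) * (x - a) := fun x hx =>
    mul_pos (mul_pos hγ (by linarith)) (sub_pos.2 hx)
  obtain ⟨s, hs, hys⟩ : ∃ s ∈ Ioo a t, y s ≤ c + blowUpProfile γ m a s := by
    have hy_bdd : ∀ᶠ s in 𝓝[>] a, y s < y a + 1 := nhdsWithin_le_nhds <|
      (hy_diff a ha).continuousAt.eventually (Iio_mem_nhds (lt_add_one (y a)))
    have hz_large : ∀ᶠ s in 𝓝[>] a, y a + 1 - c ≤ blowUpProfile γ m a s :=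
      (tendsto_blowUpProfile_nhdsGT hγ hm a).eventually_ge_atTop _
    obtain ⟨s, ⟨hys, hzs⟩, hs⟩ := ((hy_bdd.and hz_large).and (Ioo_mem_nhdsGT hat)).exists
    exact ⟨s, hs, by linarith⟩
  have has : ∀ x ∈ Icc s t, a < x := fun x hx => hs.1.trans_le hx.1
  refine le_of_deriv_le_of_lt_deriv (F := fun u => β - γ * u ^ m) hs.2.le
    (fun x hx => hy_diff x (ha.trans (has x hx)))
    (fun x hx => (hasDerivAt_blowUpProfile (hu x (has x hx))).const_add c)
    (fun x hx => by linarith [hineq x (ha.trans (has x (Ico_subset_Icc_self hx)))])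
    (fun x hx => ?_) hys
  have hg : 0 < blowUpProfile γ m a x := rpow_pos_of_pos (hu x (has x (Ico_subset_Icc_self hx))) _
  have := mul_lt_mul_of_pos_left (rpow_add_rpow_lt_add_rpow hc hg hm) hγ
  linarith

theorem stmt_6_general (γ β m : ℝ) (y : ℝ → ℝ)
    (hγ : 0 < γ) (hβ : 0 < β) (hm : 1 < m)
    (hy_diff : ∀ t : ℝ, 0 < t → DifferentiableAt ℝ y t)
    (hineq : ∀ t : ℝ, 0 < t → deriv y t + γ * y t ^ m ≤ β) :
    ∀ t : ℝ, 0 < t →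
      y t ≤ (β / γ) ^ (1 / m) + (γ * (m - 1) * t) ^ (-(1 / (m - 1))) := by
  intro t ht
  have hcont : ContinuousAt (fun a => (β / γ) ^ (1 / m) + blowUpProfile γ m a t) 0 := by
    refine continuousAt_const.add (ContinuousAt.rpow_const (by fun_prop) (Or.inl ?_))
    simp only [sub_zero]
    have : 0 < m - 1 := by linarith
    positivity
  have hbound : ∀ᶠ a in 𝓝[>] 0, y t ≤ (β / γ) ^ (1 / m) + blowUpProfile γ m a t := by
    filter_upwards [Ioo_mem_nhdsGT ht] with a ha
    exact le_add_blowUpProfile hγ hβ hm hy_diff hineq ha.1 ha.2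
  simpa [blowUpProfile] using ge_of_tendsto (hcont.tendsto.mono_left nhdsWithin_le_nhds) hbound

theorem stmt_6 (γ β m : ℝ) (y : ℝ → ℝ)
    (hγ : 0 < γ) (hβ : 0 < β) (hm : 1 < m)
    (hy_nonneg : ∀ t : ℝ, 0 < t → 0 ≤ y t)
    (hy_diff : ∀ t : ℝ, 0 < t → DifferentiableAt ℝ y t)
    (hineq : ∀ t : ℝ, 0 < t → deriv y t + γ * y t ^ m ≤ β) :
    ∀ t : ℝ, 0 < t →
      y t ≤ (β / γ) ^ (1 / m) + (γ * (m - 1) * t) ^ (-(1 / (m - 1))) :=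
  stmt_6_general γ β m y hγ hβ hm hy_diff hineq
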